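/- Let μ ∈ (0, 7/2) and fix a constant K_{1,1} > 0. Then for all M > 0 and J > 0, the infimum of the reduced energy satisfies the scaling relation R_{M,J}^μ = M^{(7−2μ)/3} J^{2(μ+1)/3} R_{1,1}^μ, where R_{M,J}^μ := inf{ E_J^μ(ρ) : ρ ∈ F_M^μ }. -/

import Mathlib

open MeasureTheory Filter Metric
open scoped Topology ENNReal

noncomputable section

/-- Three-dimensional Euclidean space. -/
abbrev E3 := EuclideanSpace ℝ (Fin 3)

/-- Potential energy `E_pot(σ) = -(1/2)∬ σ(x)σ(y)/|x-y| dx dy`. -/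
def Epot (σ : E3 → ℝ) : ℝ :=
  -(1/2) * ∫ p : E3 × E3, σ p.1 * σ p.2 / ‖p.1 - p.2‖

/-- The exponent `p_μ = (2μ+5)/(2μ+3)`. -/
def pExp (μ : ℝ) : ℝ := (2*μ + 5) / (2*μ + 3)

/-- `Ψ(ρ) = ∫ ρ(x)^{p_μ} dx`. -/
def Psi (μ : ℝ) (ρ : E3 → ℝ) : ℝ := ∫ x : E3, ρ x ^ pExp μ

/-- The constraint set `F_M^μ = {ρ ∈ L¹ ∩ L^{p_μ} : ρ ≥ 0 a.e., ∫ρ = M}`. -/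
def FSet (μ M : ℝ) : Set (E3 → ℝ) :=
  {ρ | MemLp ρ 1 volume ∧ MemLp ρ (ENNReal.ofReal (pExp μ)) volume ∧
       0 ≤ᵐ[volume] ρ ∧ ∫ x : E3, ρ x = M}

/-- The reduced energy functional
`E_J^μ(ρ) = K_{1,1} J^{-2(μ+1)/3} Ψ(ρ)^{(2μ+3)/3} + E_pot(ρ)`. -/
def EJ (μ K11 J : ℝ) (ρ : E3 → ℝ) : ℝ :=
  K11 * J ^ (-(2*(μ+1))/3) * Psi μ ρ ^ ((2*μ + 3)/3) + Epot ρ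

/-- `R_{M,J}^μ = inf {E_J^μ(ρ) : ρ ∈ F_M^μ}`. -/
def RMJ (μ K11 M J : ℝ) : ℝ := sInf (EJ μ K11 J '' FSet μ M)

open scoped Pointwise

/-! The dilation `σ ↦ a σ(·/λ)` multiplies the mass by `aλ³`, `Ψ` by `a^{p_μ} λ³` and `E_pot`
by `a²λ⁵`, and maps `F_m^μ` bijectively onto `F_{aλ³m}^μ`. Given `M, J > 0`, the two conditions
"mass `M`" and "the kinetic term `J^{-2(μ+1)/3} Ψ^{(2μ+3)/3}` gains the same factor `a²λ⁵` as
`E_pot`" are linear in `(log a, log λ)` and have a unique solution. For it,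
`E_J^μ(a σ(·/λ)) = a²λ⁵ E_1^μ(σ)` on `F_1^μ`, so the infima scale by
`a²λ⁵ = M^{(7-2μ)/3} J^{2(μ+1)/3}`. -/

section HaarDilation

variable {E F : Type*} [NormedAddCommGroup E] [NormedSpace ℝ E] [MeasurableSpace E]
  [BorelSpace E] [FiniteDimensional ℝ E] [NormedAddCommGroup F]
  {ν : Measure E} [ν.IsAddHaarMeasure]

theorem MeasureTheory.MemLp.comp_smul {f : E → F} {p : ℝ≥0∞} (hf : MemLp f p ν) {r : ℝ}
    (hr : r ≠ 0) : MemLp (fun x => f (r • x)) p ν := by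
  refine MemLp.comp_of_map ?_ (measurable_const_smul r).aemeasurable
  rw [Measure.map_addHaar_smul ν hr]
  exact hf.smul_measure ENNReal.ofReal_ne_top

end HaarDilation

def dilate (a lam : ℝ) (σ : E3 → ℝ) : E3 → ℝ := fun x => a * σ (lam⁻¹ • x)

section Dilate

variable {μ a lam m : ℝ} {σ : E3 → ℝ}

theorem dilate_dilate (a b lam κ : ℝ) (σ : E3 → ℝ) :
    dilate a lam (dilate b κ σ) = dilate (a * b) (lam * κ) σ := by
  ext x
  simp only [dilate, smul_smul, mul_inv, mul_comm κ⁻¹, mul_assoc]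

theorem dilate_one_one (σ : E3 → ℝ) : dilate 1 1 σ = σ := by
  ext x; simp [dilate]

theorem integral_dilate (hlam : 0 ≤ lam) :
    ∫ x, dilate a lam σ x = a * lam ^ 3 * ∫ x, σ x := by
  simp only [dilate]
  rw [integral_const_mul, Measure.integral_comp_inv_smul_of_nonneg _ _ hlam,
    finrank_euclideanSpace_fin, smul_eq_mul, mul_assoc]

theorem Psi_dilate (ha : 0 ≤ a) (hlam : 0 ≤ lam) (hσ : 0 ≤ᵐ[volume] σ) :
    Psi μ (dilate a lam σ) = a ^ pExp μ * lam ^ 3 * Psi μ σ := by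
  have hpow : (fun x => (a * σ x) ^ pExp μ) =ᵐ[volume]
      fun x => a ^ pExp μ * σ x ^ pExp μ := by
    filter_upwards [hσ] with x hx using Real.mul_rpow ha hx
  simp only [Psi, dilate]
  rw [Measure.integral_comp_inv_smul_of_nonneg (volume : Measure E3)
    (fun x => (a * σ x) ^ pExp μ) hlam, finrank_euclideanSpace_fin, smul_eq_mul,
    integral_congr_ae hpow, integral_const_mul]
  ring

theorem Epot_dilate (hlam : 0 < lam) :
    Epot (dilate a lam σ) = a ^ 2 * lam ^ 5 * Epot σ := by
  have : (volume : Measure (E3 × E3)).IsAddHaarMeasure := by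
    rw [Measure.volume_eq_prod]; infer_instance
  set k : E3 × E3 → ℝ := fun q => σ q.1 * σ q.2 / ‖q.1 - q.2‖
  -- the kernel `1/|x - y|` is homogeneous of degree `-1`
  have hk : ∀ q : E3 × E3, dilate a lam σ q.1 * dilate a lam σ q.2 / ‖q.1 - q.2‖
      = a ^ 2 * lam⁻¹ * k (lam⁻¹ • q) := by
    intro q
    simp only [k, dilate, Prod.smul_fst, Prod.smul_snd, ← smul_sub, norm_smul,
      Real.norm_eq_abs, abs_of_pos (inv_pos.2 hlam)]
    field_simp
  simp only [Epot, hk, integral_const_mul]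
  rw [Measure.integral_comp_inv_smul_of_nonneg (volume : Measure (E3 × E3)) k hlam.le,
    Module.finrank_prod, finrank_euclideanSpace_fin, smul_eq_mul]
  field_simp
  ring

theorem dilate_mem_FSet (ha : 0 ≤ a) (hlam : 0 < lam) (hσ : σ ∈ FSet μ m) :
    dilate a lam σ ∈ FSet μ (a * lam ^ 3 * m) := by
  obtain ⟨hL1, hLp, hnonneg, hmass⟩ := hσ
  have hlam' : lam⁻¹ ≠ 0 := inv_ne_zero hlam.ne'
  refine ⟨(hL1.comp_smul hlam').const_mul a, (hLp.comp_smul hlam').const_mul a,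
    ?_, by rw [integral_dilate hlam.le, hmass]⟩
  filter_upwards [(Measure.quasiMeasurePreserving_smul volume hlam').ae hnonneg] with x hx
  exact mul_nonneg ha hx

theorem FSet_eq_image_dilate (ha : 0 < a) (hlam : 0 < lam) :
    FSet μ (a * lam ^ 3 * m) = dilate a lam '' FSet μ m := by
  refine subset_antisymm (fun ρ hρ => ⟨dilate a⁻¹ lam⁻¹ ρ, ?_, ?_⟩)
    (Set.image_subset_iff.2 fun σ hσ => dilate_mem_FSet ha.le hlam hσ)
  · have hm : a⁻¹ * lam⁻¹ ^ 3 * (a * lam ^ 3 * m) = m := by field_simp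
    simpa only [hm] using dilate_mem_FSet (inv_pos.2 ha).le (inv_pos.2 hlam) hρ
  · rw [dilate_dilate, mul_inv_cancel₀ ha.ne', mul_inv_cancel₀ hlam.ne', dilate_one_one]

end Dilate

section Energy

variable {μ K a lam : ℝ} {σ : E3 → ℝ}

theorem Psi_nonneg (hσ : 0 ≤ᵐ[volume] σ) : 0 ≤ Psi μ σ :=
  integral_nonneg_of_ae (by filter_upwards [hσ] with x hx using Real.rpow_nonneg hx _)

theorem EJ_dilate {J J' : ℝ} (ha : 0 ≤ a) (hlam : 0 < lam) (hσ : 0 ≤ᵐ[volume] σ)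
    (hkin : J ^ (-(2*(μ+1))/3) * (a ^ pExp μ * lam ^ 3) ^ ((2*μ+3)/3)
      = a ^ 2 * lam ^ 5 * J' ^ (-(2*(μ+1))/3)) :
    EJ μ K J (dilate a lam σ) = a ^ 2 * lam ^ 5 * EJ μ K J' σ := by
  rw [EJ, EJ, Psi_dilate ha hlam.le hσ, Epot_dilate hlam,
    Real.mul_rpow (by positivity) (Psi_nonneg hσ)]
  linear_combination K * Psi μ σ ^ ((2*μ+3)/3) * hkin

theorem RMJ_dilate {M m J J' : ℝ} (ha : 0 < a) (hlam : 0 < lam) (hmass : a * lam ^ 3 * m = M)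
    (hkin : J ^ (-(2*(μ+1))/3) * (a ^ pExp μ * lam ^ 3) ^ ((2*μ+3)/3)
      = a ^ 2 * lam ^ 5 * J' ^ (-(2*(μ+1))/3)) :
    RMJ μ K M J = a ^ 2 * lam ^ 5 * RMJ μ K m J' := by
  have hE : Set.EqOn (EJ μ K J ∘ dilate a lam) (fun σ => a ^ 2 * lam ^ 5 * EJ μ K J' σ)
      (FSet μ m) := fun σ hσ => EJ_dilate ha.le hlam hσ.2.2.1 hkin
  rw [RMJ, RMJ, ← hmass, FSet_eq_image_dilate ha hlam, ← Set.image_comp, hE.image_eq,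
    show (fun σ => a ^ 2 * lam ^ 5 * EJ μ K J' σ) = ((a ^ 2 * lam ^ 5) • ·) ∘ EJ μ K J'
      from rfl,
    Set.image_comp, Set.image_smul, Real.sInf_smul_of_nonneg (by positivity), smul_eq_mul]

end Energy

theorem exists_dilation_params {μ M J : ℝ} (hμ : 2 * μ + 3 ≠ 0) (hM : 0 < M) (hJ : 0 < J) :
    ∃ a lam : ℝ, 0 < a ∧ 0 < lam ∧ a * lam ^ 3 = M ∧
      J ^ (-(2*(μ+1))/3) * (a ^ pExp μ * lam ^ 3) ^ ((2*μ+3)/3) = a ^ 2 * lam ^ 5 ∧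
      a ^ 2 * lam ^ 5 = M ^ ((7 - 2*μ)/3) * J ^ (2*(μ+1)/3) := by
  obtain ⟨m, rfl⟩ : ∃ m, Real.exp m = M := ⟨_, Real.exp_log hM⟩
  obtain ⟨j, rfl⟩ : ∃ j, Real.exp j = J := ⟨_, Real.exp_log hJ⟩
  refine ⟨Real.exp ((2 - 2*μ) * m + 2*(μ+1) * j), Real.exp ((2*μ-1)/3 * m - 2*(μ+1)/3 * j),
    Real.exp_pos _, Real.exp_pos _, ?_, ?_, ?_⟩ <;>
  simp only [← Real.exp_mul, ← Real.exp_nat_mul, ← Real.exp_add, Real.exp_eq_exp, pExp] <;>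
  field_simp <;> ring

theorem reduced_infimum_scaling_general (μ K11 : ℝ) (hμ : 0 < μ) :
    ∀ M J : ℝ, 0 < M → 0 < J →
      RMJ μ K11 M J = M ^ ((7 - 2*μ)/3) * J ^ (2*(μ+1)/3) * RMJ μ K11 1 1 := by
  intro M J hM hJ
  obtain ⟨a, lam, ha, hlam, hmass, hkin, hfactor⟩ :=
    exists_dilation_params (μ := μ) (by linarith) hM hJ
  rw [RMJ_dilate ha hlam (by rw [mul_one, hmass]) (by rw [Real.one_rpow, mul_one, hkin]),
    hfactor]

/-- Scaling relation for the infimum of the reduced energy: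
`R_{M,J}^μ = M^{(7-2μ)/3} J^{2(μ+1)/3} R_{1,1}^μ`. -/
theorem reduced_infimum_scaling (μ K11 : ℝ) (hμ : 0 < μ) (hμ' : μ < 7/2) (hK : 0 < K11) :
    ∀ M J : ℝ, 0 < M → 0 < J →
      RMJ μ K11 M J = M ^ ((7 - 2*μ)/3) * J ^ (2*(μ+1)/3) * RMJ μ K11 1 1 :=
  reduced_infimum_scaling_general μ K11 hμ
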